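/- Let ν be a nonzero measure on (0,∞) satisfying ν(s·B) = s^{-2}ν(B) for a fixed s > 1 and all Borel B ⊂ (0,∞), and suppose ∫ (x² ∧ 1) ν(dx) < ∞. Then ν = 0. -/

import Mathlib

/-!
On the shells `(s^k, s^(k+1)]`, `k ∈ ℤ`, the scaling relation gives
`ν(shell (k+1)) = s^(-α) ν(shell k)`, so the weighted mass `s^(α k) ν(shell k)` does not
depend on `k`. For `k < 0` the shell lies in `(0, 1]`, where `min (x^α) 1 ≥ s^(α k)`, so each
of the infinitely many negative shells contributes at least `ν(shell 0)` to
`∫ min (x^α) 1 dν`. Finiteness of the integral forces `ν(shell 0) = 0`, hence every shell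
is null, and the shells cover `(0, ∞)`.
-/

open MeasureTheory Set Function
open scoped ENNReal

def powShell (s : ℝ) (k : ℤ) : Set ℝ := Ioc (s ^ k) (s ^ (k + 1))

section powShell

variable {s : ℝ}

lemma measurableSet_powShell (k : ℤ) : MeasurableSet (powShell s k) := measurableSet_Ioc

lemma image_mul_powShell (hs : 0 < s) (k : ℤ) :
    (s * ·) '' powShell s k = powShell s (k + 1) := by
  rw [powShell, powShell, image_mul_left_Ioc hs, ← zpow_one_add₀ hs.ne',
    ← zpow_one_add₀ hs.ne', add_comm 1 k, add_comm 1 (k + 1)]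

lemma pairwise_disjoint_powShell (hs : 1 ≤ s) : Pairwise (Disjoint on (powShell s)) := by
  intro m n hmn
  rcases hmn.lt_or_gt with h | h
  · exact Ioc_disjoint_Ioc_of_le (zpow_le_zpow_right₀ hs (by omega))
  · exact (Ioc_disjoint_Ioc_of_le (zpow_le_zpow_right₀ hs (by omega))).symm

lemma iUnion_powShell (hs : 1 < s) : ⋃ k, powShell s k = Ioi 0 := by
  ext x
  simp only [mem_iUnion, mem_Ioi]
  constructor
  · rintro ⟨k, hk⟩
    exact (zpow_pos (zero_lt_one.trans hs) k).trans hk.1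
  · intro hx
    exact exists_mem_Ioc_zpow hx hs

lemma rpow_le_min_rpow_one_of_mem_powShell {α : ℝ} (hs : 1 ≤ s) (hα : 0 ≤ α) {k : ℤ}
    (hk : k < 0) {x : ℝ} (hx : x ∈ powShell s k) : s ^ (α * k) ≤ min (x ^ α) 1 := by
  have hsk : s ^ (α * k) = (s ^ k) ^ α := by
    rw [mul_comm, Real.rpow_mul (zero_le_one.trans hs), Real.rpow_intCast]
  refine le_min ?_ (Real.rpow_le_one_of_one_le_of_nonpos hs ?_)
  · rw [hsk]
    exact Real.rpow_le_rpow (zpow_nonneg (zero_le_one.trans hs) k) hx.1.le hα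
  · exact mul_nonpos_of_nonneg_of_nonpos hα (by exact_mod_cast hk.le)

end powShell

section scaling

variable {ν : Measure ℝ} {s α : ℝ}

lemma weighted_measure_powShell_succ (hs : 0 < s)
    (hscale : ∀ B : Set ℝ, MeasurableSet B →
      ν ((fun x => s * x) '' B) = ENNReal.ofReal (s ^ (-α)) * ν B) (k : ℤ) :
    ENNReal.ofReal (s ^ (α * (k + 1 : ℤ))) * ν (powShell s (k + 1)) =
      ENNReal.ofReal (s ^ (α * k)) * ν (powShell s k) := by
  rw [← image_mul_powShell hs, hscale _ (measurableSet_powShell k), ← mul_assoc,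
    ← ENNReal.ofReal_mul (Real.rpow_nonneg hs.le _), ← Real.rpow_add hs]
  congr 3
  push_cast
  ring

lemma weighted_measure_powShell_eq (hs : 0 < s)
    (hscale : ∀ B : Set ℝ, MeasurableSet B →
      ν ((fun x => s * x) '' B) = ENNReal.ofReal (s ^ (-α)) * ν B) (k : ℤ) :
    ENNReal.ofReal (s ^ (α * k)) * ν (powShell s k) = ν (powShell s 0) := by
  induction k using Int.induction_on with
  | zero => simp
  | succ i ih => rw [weighted_measure_powShell_succ hs hscale, ih]
  | pred i ih => rwa [← weighted_measure_powShell_succ hs hscale, sub_add_cancel]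

lemma measure_powShell_zero_eq_zero (hs : 1 < s) (hα : 0 ≤ α)
    (hscale : ∀ B : Set ℝ, MeasurableSet B →
      ν ((fun x => s * x) '' B) = ENNReal.ofReal (s ^ (-α)) * ν B)
    (hint : ∫⁻ x in Ioi 0, ENNReal.ofReal (min (x ^ α) 1) ∂ν ≠ ⊤) :
    ν (powShell s 0) = 0 := by
  let negShell : ℕ → Set ℝ := fun n => powShell s (-(n + 1 : ℕ))
  by_contra hne
  refine hint (top_le_iff.1 ?_)
  calc ⊤ = ∑' _ : ℕ, ν (powShell s 0) := (ENNReal.tsum_const_eq_top_of_ne_zero hne).symm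
    _ = ∑' n, ENNReal.ofReal (s ^ (α * (-(n + 1 : ℕ) : ℤ))) * ν (negShell n) := by
      simp only [negShell, weighted_measure_powShell_eq (zero_lt_one.trans hs) hscale]
    _ ≤ ∑' n, ∫⁻ x in negShell n, ENNReal.ofReal (min (x ^ α) 1) ∂ν := by
      refine ENNReal.tsum_le_tsum fun n => ?_
      rw [← setLIntegral_const]
      exact setLIntegral_mono' (measurableSet_powShell _) fun x hx =>
        ENNReal.ofReal_le_ofReal
          (rpow_le_min_rpow_one_of_mem_powShell hs.le hα (by omega) hx)
    _ = ∫⁻ x in ⋃ n, negShell n, ENNReal.ofReal (min (x ^ α) 1) ∂ν :=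
      (lintegral_iUnion (fun n => measurableSet_powShell _)
        ((pairwise_disjoint_powShell hs.le).comp_of_injective
          fun m n h => by simpa using h) _).symm
    _ ≤ ∫⁻ x in Ioi 0, ENNReal.ofReal (min (x ^ α) 1) ∂ν :=
      lintegral_mono_set (iUnion_powShell hs ▸ iUnion_subset fun n =>
        subset_iUnion (powShell s) _)

lemma measure_powShell_eq_zero (hs : 1 < s) (hα : 0 ≤ α)
    (hscale : ∀ B : Set ℝ, MeasurableSet B →
      ν ((fun x => s * x) '' B) = ENNReal.ofReal (s ^ (-α)) * ν B)
    (hint : ∫⁻ x in Ioi 0, ENNReal.ofReal (min (x ^ α) 1) ∂ν ≠ ⊤) (k : ℤ) :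
    ν (powShell s k) = 0 := by
  have hs0 : 0 < s := zero_lt_one.trans hs
  have hweight := weighted_measure_powShell_eq hs0 hscale k
  rw [measure_powShell_zero_eq_zero hs hα hscale hint, mul_eq_zero] at hweight
  exact hweight.resolve_left (by simpa using Real.rpow_pos_of_pos hs0 _)

lemma measure_Ioi_zero_eq_zero_of_scaling (hs : 1 < s) (hα : 0 ≤ α)
    (hscale : ∀ B : Set ℝ, MeasurableSet B →
      ν ((fun x => s * x) '' B) = ENNReal.ofReal (s ^ (-α)) * ν B)
    (hint : ∫⁻ x in Ioi 0, ENNReal.ofReal (min (x ^ α) 1) ∂ν ≠ ⊤) :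
    ν (Ioi 0) = 0 := by
  rw [← iUnion_powShell hs]
  exact measure_iUnion_null (measure_powShell_eq_zero hs hα hscale hint)

end scaling

/-- Let `ν` be a measure on `(0,∞)` satisfying `ν(sB) = s^{-2} ν(B)` for a fixed `s > 1`
and all Borel `B ⊆ (0,∞)`, and suppose `∫ (x² ∧ 1) ν(dx) < ∞`.  Then `ν = 0`. -/
theorem stmt11 (ν : Measure ℝ) (s : ℝ) (hs : 1 < s)
    (hsupp : ν (Set.Iic 0) = 0)
    (hscale : ∀ B : Set ℝ, MeasurableSet B →
      ν ((fun x => s * x) '' B) = ENNReal.ofReal (s ^ (-2 : ℝ)) * ν B)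
    (hint : ∫⁻ x in Set.Ioi (0 : ℝ), ENNReal.ofReal (min (x ^ 2) 1) ∂ν ≠ ⊤) :
    ν = 0 := by
  have hint' : ∫⁻ x in Ioi 0, ENNReal.ofReal (min (x ^ (2 : ℝ)) 1) ∂ν ≠ ⊤ := by
    simpa only [Real.rpow_two] using hint
  have hIoi := measure_Ioi_zero_eq_zero_of_scaling hs zero_le_two hscale hint'
  rw [← Measure.measure_univ_eq_zero, ← Iic_union_Ioi (a := (0 : ℝ))]
  exact measure_union_null hsupp hIoi
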